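/- arXiv:2504.17495 — 3 statements merged into one kernel-verified Lean document; each statement's English description precedes it below -/
import Mathlib

section
/- Let G be a countable discrete group with length function l of polynomial growth with exponent m. Let t : G → ℝ≥0 satisfy ‖t‖_a² := ∑_{γ∈G} t(γ)² (1+l(γ))^{2a} < ∞ for some a with 2a > m + 2. Then the convolution operator T on ℓ²(G) given by (Tξ)(γ₁) = ∑_{γ₂} t(γ₂⁻¹γ₁) ξ(γ₂) is bounded, with ‖T‖ ≤ C·‖t‖_a for a constant C depending only on G, l, a. -/
open MeasureTheory
open scoped ENNReal

/-- Cauchy–Schwarz for `ℝ≥0∞`-valued tsums on a countable type. -/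
lemma my_tsum_cs {α : Type*} [Countable α] (f g : α → ℝ≥0∞) :
    (∑' x, f x * g x) ^ 2 ≤ (∑' x, f x ^ 2) * (∑' x, g x ^ 2) := by
  letI : MeasurableSpace α := ⊤
  haveI : MeasurableSingletonClass α := ⟨fun _ => trivial⟩
  have hmeas : ∀ h : α → ℝ≥0∞, Measurable h := fun h s _ => trivial
  have hpq : (2 : ℝ).HolderConjugate 2 := Real.HolderConjugate.two_two
  have H := ENNReal.lintegral_mul_le_Lp_mul_Lq (Measure.count (α := α)) hpq
    (hmeas f).aemeasurable (hmeas g).aemeasurable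
  simp only [Pi.mul_apply, lintegral_count] at H
  have h2 : ∀ h : α → ℝ≥0∞, (∑' x, h x ^ (2:ℝ)) = ∑' x, h x ^ 2 := by
    intro h
    refine tsum_congr fun x => ?_
    rw [show (2:ℝ) = ((2:ℕ):ℝ) by norm_num, ENNReal.rpow_natCast]
  rw [h2 f, h2 g] at H
  calc (∑' x, f x * g x) ^ 2
      ≤ ((∑' x, f x ^ 2) ^ (1/(2:ℝ)) * (∑' x, g x ^ 2) ^ (1/(2:ℝ))) ^ 2 :=
        pow_le_pow_left₀ (zero_le) H 2
    _ = (∑' x, f x ^ 2) * (∑' x, g x ^ 2) := by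
        rw [mul_pow, ← ENNReal.rpow_natCast (_ ^ (1/(2:ℝ))) 2,
          ← ENNReal.rpow_natCast ((∑' x, g x ^ 2) ^ (1/(2:ℝ))) 2,
          ← ENNReal.rpow_mul, ← ENNReal.rpow_mul]
        norm_num

lemma my_weight_fin {G : Type*} [Countable G] (l : G → ℝ) (hnn : ∀ γ, 0 ≤ l γ)
    (c m : ℝ) (hc : 0 < c)
    (hfin : ∀ r : ℝ, 0 ≤ r → {γ : G | l γ ≤ r}.Finite)
    (hcard : ∀ r : ℝ, 0 ≤ r → (Nat.card {γ : G | l γ ≤ r} : ℝ) ≤ c * (1 + r) ^ m)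
    (b : ℝ) (hb : m + 1 < b) (hb0 : 0 < b) :
    (∑' γ : G, ENNReal.ofReal ((1 + l γ) ^ (-b))) ≠ ∞ := by
  classical
  set k : G → ℕ := fun γ => ⌈l γ⌉₊ with hk
  have h1l : ∀ γ : G, (0:ℝ) < 1 + l γ := fun γ => by linarith [hnn γ]
  have hlek : ∀ γ : G, l γ ≤ (k γ : ℝ) := fun γ => Nat.le_ceil _
  have hhalf : ∀ γ : G, (1 + (k γ : ℝ)) / 2 ≤ 1 + l γ := by
    intro γ
    rcases Nat.eq_zero_or_pos (k γ) with h0 | h1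
    · rw [h0]; push_cast; linarith [hnn γ]
    · have hlt : ((k γ : ℝ) - 1) < l γ := by
        by_contra hcon
        push_neg at hcon
        have h2 : l γ ≤ ((k γ - 1 : ℕ) : ℝ) := by
          rw [Nat.cast_sub h1]; push_cast; linarith
        have h3 : k γ ≤ k γ - 1 := Nat.ceil_le.mpr h2
        omega
      have hge : (1:ℝ) ≤ (k γ : ℝ) := by exact_mod_cast h1
      linarith
  have hpt : ∀ γ : G, ENNReal.ofReal ((1 + l γ) ^ (-b)) ≤
      ENNReal.ofReal (2 ^ b * (1 + (k γ : ℝ)) ^ (-b)) := by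
    intro γ
    apply ENNReal.ofReal_le_ofReal
    have hkpos : (0:ℝ) < (1 + (k γ:ℝ))/2 := by positivity
    have h1 : (1 + l γ) ^ (-b) ≤ ((1 + (k γ:ℝ))/2) ^ (-b) :=
      Real.rpow_le_rpow_of_nonpos hkpos (hhalf γ) (by linarith)
    have h2 : ((1 + (k γ:ℝ))/2) ^ (-b) = 2 ^ b * (1 + (k γ:ℝ)) ^ (-b) := by
      rw [Real.div_rpow (by positivity) (by norm_num),
        Real.rpow_neg (by norm_num : (0:ℝ) ≤ 2), division_def, inv_inv, mul_comm]
    rw [h2] at h1; exact h1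
  have hfib : ∀ n : ℕ, ({γ : G | k γ = n}).Finite := by
    intro n
    refine (hfin n (Nat.cast_nonneg n)).subset ?_
    intro γ hγ
    simp only [Set.mem_setOf_eq] at hγ ⊢
    calc l γ ≤ (k γ : ℝ) := hlek γ
      _ = n := by rw [hγ]
  have hsummble : Summable (fun n : ℕ => c * 2 ^ b * (1 + (n:ℝ)) ^ (m - b)) := by
    apply Summable.mul_left
    have h1 : Summable (fun n : ℕ => ((n + 1 : ℕ):ℝ) ^ (m - b)) := by
      rw [summable_nat_add_iff (f := fun n : ℕ => ((n:ℕ):ℝ) ^ (m - b)) 1]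
      exact Real.summable_nat_rpow.2 (by linarith)
    refine h1.congr fun n => ?_
    push_cast; rw [add_comm]
  have hS2 : (∑' n : ℕ, ENNReal.ofReal (c * 2 ^ b * (1 + (n:ℝ)) ^ (m - b))) ≠ ∞ := by
    rw [← ENNReal.ofReal_tsum_of_nonneg
      (fun n => mul_nonneg (mul_nonneg hc.le (Real.rpow_nonneg (by norm_num) _))
        (Real.rpow_nonneg (by positivity) _)) hsummble]
    exact ENNReal.ofReal_ne_top
  refine ne_top_of_le_ne_top hS2 ?_
  calc ∑' γ : G, ENNReal.ofReal ((1 + l γ) ^ (-b))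
      ≤ ∑' γ : G, ENNReal.ofReal (2 ^ b * (1 + (k γ : ℝ)) ^ (-b)) := ENNReal.tsum_le_tsum hpt
    _ = ∑' n : ℕ, ∑' γ : {γ : G // k γ = n}, ENNReal.ofReal (2 ^ b * (1 + (k γ.1 : ℝ)) ^ (-b)) := by
        rw [← (Equiv.sigmaFiberEquiv k).tsum_eq
          (f := fun γ => ENNReal.ofReal (2 ^ b * (1 + (k γ : ℝ)) ^ (-b))), ENNReal.tsum_sigma']
        rfl
    _ ≤ ∑' n : ℕ, ENNReal.ofReal (c * 2 ^ b * (1 + (n:ℝ)) ^ (m - b)) := by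
        refine ENNReal.tsum_le_tsum fun n => ?_
        letI : Fintype {γ : G // k γ = n} := (hfib n).fintype
        have hconst : ∀ γ : {γ : G // k γ = n},
            ENNReal.ofReal (2 ^ b * (1 + (k γ.1 : ℝ)) ^ (-b))
              = ENNReal.ofReal (2 ^ b * (1 + (n:ℝ)) ^ (-b)) := fun γ => by rw [γ.2]
        have hsum : ∑' γ : {γ : G // k γ = n}, ENNReal.ofReal (2 ^ b * (1 + (k γ.1 : ℝ)) ^ (-b))
            = (Nat.card {γ : G // k γ = n} : ℝ≥0∞) * ENNReal.ofReal (2 ^ b * (1 + (n:ℝ)) ^ (-b)) := by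
          rw [tsum_congr hconst, tsum_fintype, Finset.sum_const, Finset.card_univ,
            Nat.card_eq_fintype_card, nsmul_eq_mul]
        rw [hsum]
        have hcn : (Nat.card {γ : G // k γ = n} : ℝ) ≤ c * (1 + (n:ℝ)) ^ m := by
          refine le_trans ?_ (hcard n (Nat.cast_nonneg n))
          have hsub : {γ : G | k γ = n} ⊆ {γ : G | l γ ≤ (n:ℝ)} := by
            intro γ hγ
            simp only [Set.mem_setOf_eq] at hγ ⊢
            calc l γ ≤ (k γ : ℝ) := hlek γ
              _ = n := by rw [hγ]
          exact_mod_cast Nat.card_mono (hfin n (Nat.cast_nonneg n)) hsub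
        calc (Nat.card {γ : G // k γ = n} : ℝ≥0∞) * ENNReal.ofReal (2 ^ b * (1 + (n:ℝ)) ^ (-b))
            = ENNReal.ofReal ((Nat.card {γ : G // k γ = n} : ℝ) * (2 ^ b * (1 + (n:ℝ)) ^ (-b))) := by
              rw [ENNReal.ofReal_mul (Nat.cast_nonneg _), ENNReal.ofReal_natCast]
          _ ≤ ENNReal.ofReal (c * 2 ^ b * (1 + (n:ℝ)) ^ (m - b)) := by
              apply ENNReal.ofReal_le_ofReal
              have heq : c * 2 ^ b * (1 + (n:ℝ)) ^ (m - b)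
                  = (c * (1 + (n:ℝ)) ^ m) * (2 ^ b * (1 + (n:ℝ)) ^ (-b)) := by
                rw [show m - b = m + (-b) by ring, Real.rpow_add (by positivity)]
                ring
              rw [heq]
              apply mul_le_mul_of_nonneg_right hcn
              exact mul_nonneg (Real.rpow_nonneg (by norm_num) _)
                (Real.rpow_nonneg (by positivity) _)

/-- If `G` has polynomial growth with exponent `m` and `2a > m + 2`, then a nonnegative
kernel `t` with finite `a`-weighted ℓ² norm defines a bounded convolution operator on
`ℓ²(G)` with norm at most `C·‖t‖ₐ`. -/
theorem stmt2 {G : Type*} [Group G] [Countable G] (l : G → ℝ)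
    (hnn : ∀ γ, 0 ≤ l γ) (hone : l 1 = 0)
    (hinv : ∀ γ, l γ⁻¹ = l γ) (hsub : ∀ γ δ, l (γ * δ) ≤ l γ + l δ)
    (c m : ℝ) (hc : 0 < c) (hm : 0 < m)
    (hfin : ∀ r : ℝ, 0 ≤ r → {γ : G | l γ ≤ r}.Finite)
    (hcard : ∀ r : ℝ, 0 ≤ r → (Nat.card {γ : G | l γ ≤ r} : ℝ) ≤ c * (1 + r) ^ m)
    (a : ℝ) (ha : m + 2 < 2 * a)
    (t : G → ℝ) (ht0 : ∀ γ, 0 ≤ t γ)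
    (hta : Summable fun γ : G => (t γ) ^ 2 * (1 + l γ) ^ (2 * a)) :
    ∃ C > (0 : ℝ), ∀ ξ : G → ℂ, Memℓp ξ 2 →
      Memℓp (fun γ₁ : G => ∑' γ₂ : G, (t (γ₂⁻¹ * γ₁) : ℂ) * ξ γ₂) 2 ∧
      ∑' γ₁ : G, ‖∑' γ₂ : G, (t (γ₂⁻¹ * γ₁) : ℂ) * ξ γ₂‖ ^ 2 ≤
        C ^ 2 * (∑' γ : G, (t γ) ^ 2 * (1 + l γ) ^ (2 * a)) * ∑' γ : G, ‖ξ γ‖ ^ 2 := by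
  classical
  have h1l : ∀ γ : G, (0:ℝ) < 1 + l γ := fun γ => by linarith [hnn γ]
  set N : ℝ := ∑' γ : G, (t γ)^2 * (1 + l γ)^(2*a) with hNdef
  have hNnn : ∀ γ : G, 0 ≤ (t γ)^2 * (1 + l γ)^(2*a) := fun γ =>
    mul_nonneg (sq_nonneg _) (Real.rpow_nonneg (h1l γ).le _)
  have hN0 : 0 ≤ N := tsum_nonneg hNnn
  set T : G → ℝ≥0∞ := fun γ => ENNReal.ofReal (t γ) with hTdef
  set S : ℝ≥0∞ := ∑' γ : G, ENNReal.ofReal ((1 + l γ) ^ (-(2*a))) with hSdef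
  have hSfin : S ≠ ∞ :=
    my_weight_fin l hnn c m hc hfin hcard (2*a) (by linarith) (by linarith)
  have hfsq : ∀ γ : G, (T γ * ENNReal.ofReal ((1 + l γ)^a))^2
      = ENNReal.ofReal ((t γ)^2 * (1 + l γ)^(2*a)) := by
    intro γ
    rw [hTdef, ← ENNReal.ofReal_mul (ht0 γ),
      ← ENNReal.ofReal_pow (mul_nonneg (ht0 γ) (Real.rpow_nonneg (h1l γ).le _))]
    congr 1
    rw [mul_pow]
    congr 1
    rw [← Real.rpow_natCast ((1 + l γ)^a) 2, ← Real.rpow_mul (h1l γ).le]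
    congr 1
    push_cast; ring
  have hNe : ∑' γ : G, (T γ * ENNReal.ofReal ((1 + l γ)^a))^2 = ENNReal.ofReal N := by
    rw [tsum_congr hfsq, ← ENNReal.ofReal_tsum_of_nonneg hNnn hta]
  have hgsq : ∀ γ : G, (ENNReal.ofReal ((1 + l γ)^(-a)))^2
      = ENNReal.ofReal ((1 + l γ)^(-(2*a))) := by
    intro γ
    rw [← ENNReal.ofReal_pow (Real.rpow_nonneg (h1l γ).le _)]
    congr 1
    rw [← Real.rpow_natCast ((1 + l γ)^(-a)) 2, ← Real.rpow_mul (h1l γ).le]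
    congr 1
    push_cast; ring
  have hfg : ∀ γ : G, (T γ * ENNReal.ofReal ((1 + l γ)^a)) * ENNReal.ofReal ((1 + l γ)^(-a))
      = T γ := by
    intro γ
    rw [mul_assoc, ← ENNReal.ofReal_mul (Real.rpow_nonneg (h1l γ).le _),
      ← Real.rpow_add (h1l γ)]
    simp
  set A : ℝ≥0∞ := ∑' γ : G, T γ with hAdef
  have hA2 : A ^ 2 ≤ ENNReal.ofReal N * S := by
    have hcs := my_tsum_cs (fun γ : G => T γ * ENNReal.ofReal ((1 + l γ)^a))
      (fun γ : G => ENNReal.ofReal ((1 + l γ)^(-a)))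
    rw [tsum_congr hfg, hNe, tsum_congr hgsq] at hcs
    exact hcs
  have hAfin : A ≠ ∞ := by
    have h2 : A ^ 2 ≠ ∞ :=
      ne_top_of_le_ne_top (ENNReal.mul_ne_top ENNReal.ofReal_ne_top hSfin) hA2
    simpa [ENNReal.pow_eq_top_iff] using h2
  have hTfin : ∀ γ : G, T γ ≠ ∞ := fun γ => ENNReal.ofReal_ne_top
  have ht1 : Summable t := by
    have hs := ENNReal.summable_toReal hAfin
    exact hs.congr fun γ => ENNReal.toReal_ofReal (ht0 γ)
  refine ⟨Real.sqrt S.toReal + 1, by positivity, ?_⟩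
  intro ξ hξ
  have hξs : Summable fun γ : G => ‖ξ γ‖ ^ 2 := by
    have h := (memℓp_gen_iff (p := 2) (by norm_num) (f := ξ)).1 hξ
    refine h.congr fun γ => ?_
    rw [show ((2:ℝ≥0∞)).toReal = ((2:ℕ):ℝ) by norm_num, Real.rpow_natCast]
  set Br : ℝ := ∑' γ : G, ‖ξ γ‖ ^ 2 with hBrdef
  have hBrnn : ∀ γ : G, (0:ℝ) ≤ ‖ξ γ‖^2 := fun γ => sq_nonneg _
  set X : G → ℝ≥0∞ := fun γ => ENNReal.ofReal ‖ξ γ‖ with hXdef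
  have hXsq : ∀ γ : G, X γ ^ 2 = ENNReal.ofReal (‖ξ γ‖^2) := fun γ =>
    (ENNReal.ofReal_pow (norm_nonneg _) 2).symm
  have hB : ∑' γ : G, X γ ^ 2 = ENNReal.ofReal Br := by
    rw [tsum_congr hXsq, ← ENNReal.ofReal_tsum_of_nonneg hBrnn hξs]
  have hM : ∀ γ : G, ‖ξ γ‖ ≤ Real.sqrt Br := by
    intro γ
    have h1 : ‖ξ γ‖^2 ≤ Br := hξs.le_tsum γ (fun γ' _ => sq_nonneg _)
    have h2 := Real.sqrt_le_sqrt h1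
    rwa [Real.sqrt_sq (norm_nonneg _)] at h2
  have hts : ∀ γ₁ : G, Summable fun γ₂ : G => t (γ₂⁻¹ * γ₁) := by
    intro γ₁
    exact (((Equiv.inv G).trans (Equiv.mulRight γ₁)).summable_iff.2 ht1).congr fun γ₂ => rfl
  have htnorm : ∀ γ₁ γ₂ : G, ‖(t (γ₂⁻¹ * γ₁) : ℂ) * ξ γ₂‖ = t (γ₂⁻¹ * γ₁) * ‖ξ γ₂‖ := by
    intro γ₁ γ₂
    rw [norm_mul, Complex.norm_real, Real.norm_of_nonneg (ht0 _)]
  have hwsum : ∀ γ₁ : G, Summable fun γ₂ : G => t (γ₂⁻¹ * γ₁) * ‖ξ γ₂‖ := by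
    intro γ₁
    refine Summable.of_nonneg_of_le (fun γ₂ => mul_nonneg (ht0 _) (norm_nonneg _))
      (fun γ₂ => mul_le_mul_of_nonneg_left (hM γ₂) (ht0 _)) ((hts γ₁).mul_right _)
  have hnsum : ∀ γ₁ : G, Summable fun γ₂ : G => ‖(t (γ₂⁻¹ * γ₁) : ℂ) * ξ γ₂‖ := fun γ₁ =>
    (hwsum γ₁).congr fun γ₂ => (htnorm γ₁ γ₂).symm
  set w : G → ℝ := fun γ₁ => ∑' γ₂ : G, t (γ₂⁻¹ * γ₁) * ‖ξ γ₂‖ with hwdef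
  have hw0 : ∀ γ₁ : G, 0 ≤ w γ₁ := fun γ₁ =>
    tsum_nonneg fun γ₂ => mul_nonneg (ht0 _) (norm_nonneg _)
  have hΦle : ∀ γ₁ : G, ‖∑' γ₂ : G, (t (γ₂⁻¹ * γ₁) : ℂ) * ξ γ₂‖ ≤ w γ₁ := by
    intro γ₁
    calc ‖∑' γ₂ : G, (t (γ₂⁻¹ * γ₁) : ℂ) * ξ γ₂‖
        ≤ ∑' γ₂ : G, ‖(t (γ₂⁻¹ * γ₁) : ℂ) * ξ γ₂‖ := norm_tsum_le_tsum_norm (hnsum γ₁)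
      _ = w γ₁ := tsum_congr fun γ₂ => htnorm γ₁ γ₂
  have hF : ∀ γ₁ : G, (∑' γ₂ : G, T (γ₂⁻¹ * γ₁) * X γ₂) = ENNReal.ofReal (w γ₁) := by
    intro γ₁
    rw [hwdef, ENNReal.ofReal_tsum_of_nonneg
      (fun γ₂ => mul_nonneg (ht0 _) (norm_nonneg _)) (hwsum γ₁)]
    exact tsum_congr fun γ₂ => (ENNReal.ofReal_mul (ht0 _)).symm
  have hTtrans2 : ∀ γ₁ : G, (∑' γ₂ : G, T (γ₂⁻¹ * γ₁)) = A := by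
    intro γ₁
    exact Equiv.tsum_eq ((Equiv.inv G).trans (Equiv.mulRight γ₁)) T
  have hTtrans : ∀ γ₂ : G, (∑' γ₁ : G, T (γ₂⁻¹ * γ₁)) = A := by
    intro γ₂
    rw [← Equiv.tsum_eq (Equiv.mulLeft γ₂) (fun γ₁ => T (γ₂⁻¹ * γ₁))]
    exact tsum_congr fun γ => by simp
  set H : G → ℝ≥0∞ := fun γ₁ => ∑' γ₂ : G, T (γ₂⁻¹ * γ₁) * X γ₂ ^ 2 with hHdef
  have hCS2 : ∀ γ₁ : G, ENNReal.ofReal (w γ₁) ^ 2 ≤ A * H γ₁ := by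
    intro γ₁
    rw [← hF γ₁]
    have hcs := my_tsum_cs (fun γ₂ : G => T (γ₂⁻¹ * γ₁) ^ (1/2:ℝ))
      (fun γ₂ : G => T (γ₂⁻¹ * γ₁) ^ (1/2:ℝ) * X γ₂)
    have e1 : ∀ γ₂ : G, T (γ₂⁻¹ * γ₁) ^ (1/2:ℝ) * (T (γ₂⁻¹ * γ₁) ^ (1/2:ℝ) * X γ₂)
        = T (γ₂⁻¹ * γ₁) * X γ₂ := by
      intro γ₂
      rw [← mul_assoc, ← ENNReal.rpow_add_of_nonneg _ _ (by norm_num) (by norm_num),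
        show (1/2 + 1/2 : ℝ) = 1 by norm_num, ENNReal.rpow_one]
    have e2 : ∀ γ₂ : G, (T (γ₂⁻¹ * γ₁) ^ (1/2:ℝ)) ^ 2 = T (γ₂⁻¹ * γ₁) := by
      intro γ₂
      rw [← ENNReal.rpow_natCast (T (γ₂⁻¹ * γ₁) ^ (1/2:ℝ)) 2, ← ENNReal.rpow_mul]
      norm_num
    have e3 : ∀ γ₂ : G, (T (γ₂⁻¹ * γ₁) ^ (1/2:ℝ) * X γ₂) ^ 2
        = T (γ₂⁻¹ * γ₁) * X γ₂ ^ 2 := by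
      intro γ₂; rw [mul_pow, e2]
    rw [tsum_congr e1, tsum_congr e2, tsum_congr e3, hTtrans2 γ₁] at hcs
    exact hcs
  have hHsum : ∑' γ₁ : G, H γ₁ = A * ENNReal.ofReal Br := by
    calc ∑' γ₁ : G, ∑' γ₂ : G, T (γ₂⁻¹ * γ₁) * X γ₂ ^ 2
        = ∑' γ₂ : G, ∑' γ₁ : G, T (γ₂⁻¹ * γ₁) * X γ₂ ^ 2 := ENNReal.tsum_comm
      _ = ∑' γ₂ : G, A * X γ₂ ^ 2 := by
          refine tsum_congr fun γ₂ => ?_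
          rw [ENNReal.tsum_mul_right, hTtrans γ₂]
      _ = A * ENNReal.ofReal Br := by rw [ENNReal.tsum_mul_left, hB]
  have hmain : ∑' γ₁ : G, ENNReal.ofReal (w γ₁ ^ 2)
      ≤ ENNReal.ofReal N * S * ENNReal.ofReal Br := by
    calc ∑' γ₁ : G, ENNReal.ofReal (w γ₁ ^ 2)
        = ∑' γ₁ : G, ENNReal.ofReal (w γ₁) ^ 2 :=
          tsum_congr fun γ₁ => ENNReal.ofReal_pow (hw0 γ₁) 2
      _ ≤ ∑' γ₁ : G, A * H γ₁ := ENNReal.tsum_le_tsum hCS2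
      _ = A * (A * ENNReal.ofReal Br) := by rw [ENNReal.tsum_mul_left, hHsum]
      _ = A ^ 2 * ENNReal.ofReal Br := by ring
      _ ≤ ENNReal.ofReal N * S * ENNReal.ofReal Br := mul_le_mul_left hA2 _
  have hRfin : ENNReal.ofReal N * S * ENNReal.ofReal Br ≠ ∞ :=
    ENNReal.mul_ne_top (ENNReal.mul_ne_top ENNReal.ofReal_ne_top hSfin) ENNReal.ofReal_ne_top
  have hw2sum : Summable fun γ₁ : G => w γ₁ ^ 2 := by
    have hs := ENNReal.summable_toReal (ne_top_of_le_ne_top hRfin hmain)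
    exact hs.congr fun γ₁ => ENNReal.toReal_ofReal (sq_nonneg _)
  have hΦ2sum : Summable fun γ₁ : G => ‖∑' γ₂ : G, (t (γ₂⁻¹ * γ₁) : ℂ) * ξ γ₂‖ ^ 2 := by
    refine Summable.of_nonneg_of_le (fun γ₁ => sq_nonneg _) (fun γ₁ => ?_) hw2sum
    exact pow_le_pow_left₀ (norm_nonneg _) (hΦle γ₁) 2
  constructor
  · apply memℓp_gen
    refine hΦ2sum.congr fun γ₁ => ?_
    rw [show ((2:ℝ≥0∞)).toReal = ((2:ℕ):ℝ) by norm_num, Real.rpow_natCast]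
  · have hle1 : ∑' γ₁ : G, ‖∑' γ₂ : G, (t (γ₂⁻¹ * γ₁) : ℂ) * ξ γ₂‖ ^ 2
        ≤ ∑' γ₁ : G, w γ₁ ^ 2 :=
      Summable.tsum_le_tsum (fun γ₁ => pow_le_pow_left₀ (norm_nonneg _) (hΦle γ₁) 2) hΦ2sum hw2sum
    have hle2 : ∑' γ₁ : G, w γ₁ ^ 2 ≤ N * S.toReal * Br := by
      have h1 : ∑' γ₁ : G, w γ₁ ^ 2 = (∑' γ₁ : G, ENNReal.ofReal (w γ₁ ^ 2)).toReal := by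
        rw [ENNReal.tsum_toReal_eq (fun _ => ENNReal.ofReal_ne_top)]
        exact tsum_congr fun γ₁ => (ENNReal.toReal_ofReal (sq_nonneg _)).symm
      rw [h1]
      have h2 := ENNReal.toReal_mono hRfin hmain
      rwa [ENNReal.toReal_mul, ENNReal.toReal_mul, ENNReal.toReal_ofReal hN0,
        ENNReal.toReal_ofReal (tsum_nonneg hBrnn)] at h2
    have hStoC : S.toReal ≤ (Real.sqrt S.toReal + 1)^2 := by
      nlinarith [Real.sq_sqrt (ENNReal.toReal_nonneg (a := S)), Real.sqrt_nonneg S.toReal]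
    have hBr0 : (0:ℝ) ≤ Br := tsum_nonneg hBrnn
    calc ∑' γ₁ : G, ‖∑' γ₂ : G, (t (γ₂⁻¹ * γ₁) : ℂ) * ξ γ₂‖ ^ 2
        ≤ N * S.toReal * Br := hle1.trans hle2
      _ ≤ (Real.sqrt S.toReal + 1)^2 * N * Br := by
          apply mul_le_mul_of_nonneg_right _ hBr0
          calc N * S.toReal ≤ N * (Real.sqrt S.toReal + 1)^2 :=
                mul_le_mul_of_nonneg_left hStoC hN0
            _ = (Real.sqrt S.toReal + 1)^2 * N := mul_comm _ _
end

section
/- Let A be a unital Banach algebra and let B ⊆ A be a dense unital subalgebra equipped with a norm ‖·‖_B making B a Banach algebra, with ‖x‖_A ≤ ‖x‖_B for all x ∈ B. Suppose there exist constants C, k > 0 such that ‖xⁿ‖_B ≤ C·n^k·‖x‖_A^{n-1}·‖x‖_B for all x ∈ B and n ≥ 1. Then B is inverse-closed in A: if x ∈ B is invertible in A, then x⁻¹ ∈ B. -/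
open Filter

/-- In a complete normed ring, if the geometric series of `z` is summable,
then `1 - z` is a unit. -/
lemma isUnit_one_sub_of_summable_geometric {R : Type*} [NormedRing R] [CompleteSpace R]
    {z : R} (h : Summable fun n : ℕ => z ^ n) : IsUnit (1 - z) := by
  have hz : Tendsto (fun n : ℕ => z ^ n) atTop (nhds 0) := h.tendsto_atTop_zero
  have ht : Tendsto (fun n : ℕ => 1 - z ^ n) atTop (nhds 1) := by
    simpa using tendsto_const_nhds.sub hz
  have h1 : (1 - z) * ∑' i, z ^ i = 1 := by
    have hs := h.hasSum.mul_left (1 - z)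
    refine tendsto_nhds_unique hs.tendsto_sum_nat ?_
    convert ← ht using 2 with n
    rw [← mul_neg_geom_sum, Finset.mul_sum]
  have h2 : (∑' i, z ^ i) * (1 - z) = 1 := by
    have hs := h.hasSum.mul_right (1 - z)
    refine tendsto_nhds_unique hs.tendsto_sum_nat ?_
    convert ← ht using 2 with n
    rw [← geom_sum_mul_neg, Finset.sum_mul]
  exact ⟨⟨1 - z, ∑' i, z ^ i, h1, h2⟩, rfl⟩

/-- A dense Banach subalgebra (modeled by an injective dense-range norm-decreasing algebra
homomorphism `ι : B → A`) satisfying a polynomial-growth estimate on powers,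
`‖xⁿ‖_B ≤ C nᵏ ‖ι x‖^(n-1) ‖x‖_B`, is inverse-closed in `A`. -/
theorem stmt4 {A B : Type*} [NormedRing A] [NormedAlgebra ℂ A] [CompleteSpace A]
    [NormedRing B] [NormedAlgebra ℂ B] [CompleteSpace B]
    (ι : B →ₐ[ℂ] A) (hinj : Function.Injective ι) (hdense : DenseRange ι)
    (hnorm : ∀ x : B, ‖ι x‖ ≤ ‖x‖)
    (C k : ℝ) (hC : 0 < C) (hk : 0 < k)
    (hpow : ∀ x : B, ∀ n : ℕ, 1 ≤ n →
      ‖x ^ n‖ ≤ C * (n : ℝ) ^ k * ‖ι x‖ ^ (n - 1) * ‖x‖) :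
    ∀ x : B, IsUnit (ι x) → IsUnit x := by
  -- Key claim: if `‖ι z‖ < 1` then `1 - z` is a unit in `B`.
  have key : ∀ z : B, ‖ι z‖ < 1 → IsUnit (1 - z) := by
    intro z hz
    apply isUnit_one_sub_of_summable_geometric
    set r : ℝ := ‖ι z‖ with hr
    set m : ℕ := ⌈k⌉₊ with hm
    rcases eq_or_lt_of_le (norm_nonneg (ι z)) with hr0 | hr0
    · -- r = 0 : then z ^ (n + 2) = 0 for all n
      have hzero : ∀ n : ℕ, z ^ (n + 2) = 0 := by
        intro n
        have h := hpow z (n + 2) (by omega)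
        have : ‖ι z‖ ^ (n + 2 - 1) = 0 := by
          rw [← hr0]; simp [zero_pow]
        rw [this] at h
        simp only [mul_zero, zero_mul] at h
        exact norm_le_zero_iff.mp h
      rw [← summable_nat_add_iff 2]
      exact (summable_congr fun n => hzero n).mpr summable_zero
    · -- 0 < r
      have hrm : Summable (fun n : ℕ => (n : ℝ) ^ m * r ^ n) :=
        summable_pow_mul_geometric_of_norm_lt_one m (by rwa [Real.norm_eq_abs, abs_of_pos hr0])
      refine Summable.of_norm_bounded_eventually_nat
        (g := fun n => (C * ‖z‖ / r) * ((n : ℝ) ^ m * r ^ n)) (hrm.mul_left _) ?_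
      filter_upwards [eventually_ge_atTop 1] with n hn
      have h1 : ‖z ^ n‖ ≤ C * (n : ℝ) ^ k * r ^ (n - 1) * ‖z‖ := hpow z n hn
      have h2 : (n : ℝ) ^ k ≤ (n : ℝ) ^ m := by
        rw [← Real.rpow_natCast (n : ℝ) m]
        exact Real.rpow_le_rpow_of_exponent_le (by exact_mod_cast hn) (Nat.le_ceil k)
      have h3 : r ^ n = r ^ (n - 1) * r := by
        rw [← pow_succ]
        congr 1
        omega
      have hrp : (0:ℝ) ≤ r ^ (n - 1) := pow_nonneg (le_of_lt hr0) _
      calc ‖z ^ n‖ ≤ C * (n : ℝ) ^ k * r ^ (n - 1) * ‖z‖ := h1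
        _ ≤ C * (n : ℝ) ^ m * r ^ (n - 1) * ‖z‖ := by
            have := mul_le_mul_of_nonneg_right (mul_le_mul_of_nonneg_left h2 hC.le)
              (mul_nonneg hrp (norm_nonneg z))
            nlinarith [norm_nonneg z, hrp]
        _ = (C * ‖z‖ / r) * ((n : ℝ) ^ m * r ^ n) := by
            rw [h3, div_mul_eq_mul_div, eq_div_iff (show r ≠ 0 from hr0.ne')]; ring
  intro x hx
  obtain ⟨u, hu⟩ := hx
  set a : A := ((u⁻¹ : Aˣ) : A) with ha
  have hxa : ι x * a = 1 := by rw [← hu]; exact u.mul_inv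
  have hax : a * ι x = 1 := by rw [← hu]; exact u.inv_mul
  set ε : ℝ := (‖ι x‖ + 1)⁻¹ with hε
  have hεpos : 0 < ε := by positivity
  obtain ⟨y, hy⟩ := hdense.exists_dist_lt a hεpos
  have hy' : ‖ι y - a‖ < ε := by rwa [dist_comm, dist_eq_norm] at hy
  have hlt : ‖ι x‖ * ε < 1 := by
    rw [hε]
    rw [mul_inv_lt_iff₀ (by positivity), one_mul]
    linarith [norm_nonneg (ι x)]
  -- x * y is a unit
  have hxy : IsUnit (x * y) := by
    have h1 : (1 : B) - (1 - x * y) = x * y := sub_sub_cancel 1 (x * y)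
    rw [← h1]
    apply key
    have : ι (1 - x * y) = ι x * (a - ι y) := by
      simp [map_sub, map_mul, mul_sub, hxa]
    rw [this]
    calc ‖ι x * (a - ι y)‖ ≤ ‖ι x‖ * ‖a - ι y‖ := norm_mul_le _ _
      _ < 1 := by
          rw [← norm_sub_rev] at hy'
          nlinarith [norm_nonneg (ι x), norm_nonneg (a - ι y)]
  have hyx : IsUnit (y * x) := by
    have h1 : (1 : B) - (1 - y * x) = y * x := sub_sub_cancel 1 (y * x)
    rw [← h1]
    apply key
    have : ι (1 - y * x) = (a - ι y) * ι x := by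
      simp [map_sub, map_mul, sub_mul, hax]
    rw [this]
    calc ‖(a - ι y) * ι x‖ ≤ ‖a - ι y‖ * ‖ι x‖ := norm_mul_le _ _
      _ < 1 := by
          rw [← norm_sub_rev] at hy'
          nlinarith [norm_nonneg (ι x), norm_nonneg (a - ι y)]
  obtain ⟨v, hv⟩ := hxy
  obtain ⟨w, hw⟩ := hyx
  have hrinv : x * (y * (v⁻¹ : Bˣ)) = 1 := by
    rw [← mul_assoc, ← hv]; exact v.mul_inv
  have hlinv : ((w⁻¹ : Bˣ) : B) * y * x = 1 := by
    rw [mul_assoc, ← hw]; exact w.inv_mul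
  have heq : y * (v⁻¹ : Bˣ) = ((w⁻¹ : Bˣ) : B) * y := by
    calc y * ((v⁻¹ : Bˣ) : B) = (((w⁻¹ : Bˣ) : B) * y * x) * (y * ((v⁻¹ : Bˣ) : B)) := by
          rw [hlinv, one_mul]
      _ = ((w⁻¹ : Bˣ) : B) * y * (x * (y * ((v⁻¹ : Bˣ) : B))) := by
          simp [mul_assoc]
      _ = ((w⁻¹ : Bˣ) : B) * y := by rw [hrinv, mul_one]
  refine isUnit_iff_exists.mpr ⟨y * ((v⁻¹ : Bˣ) : B), hrinv, ?_⟩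
  rw [heq]
  exact hlinv
end

section
/- Let G be a countable discrete group with length function l of polynomial growth exponent m, and fix a with 2a > m + 2. For kernels t, s with finite ‖·‖_a norm (‖t‖_a² = ∑_γ |t(γ)|²(1+l(γ))^{2a}), the convolution satisfies ‖t*s‖_a ≤ C_a (‖t‖_a·‖s‖_a) for a constant C_a depending only on G, l, a; hence (W_a(G), C_a‖·‖_a) is a Banach algebra under convolution. -/
/-- Cauchy–Schwarz for infinite sums of nonnegative reals. -/
theorem cs_tsum {ι : Type*} (f g : ι → ℝ) (hf : ∀ i, 0 ≤ f i) (hg : ∀ i, 0 ≤ g i)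
    (hf2 : Summable fun i => f i ^ 2) (hg2 : Summable fun i => g i ^ 2) :
    Summable (fun i => f i * g i) ∧
    ∑' i, f i * g i ≤ Real.sqrt (∑' i, f i ^ 2) * Real.sqrt (∑' i, g i ^ 2) := by
  have hsum : Summable (fun i => f i * g i) := by
    apply Summable.of_nonneg_of_le (fun i => mul_nonneg (hf i) (hg i))
      (fun i => ?_) ((hf2.add hg2).div_const 2)
    have := sq_nonneg (f i - g i)
    ring_nf
    nlinarith
  refine ⟨hsum, Summable.tsum_le_of_sum_le hsum fun u => ?_⟩
  have h1 : (∑ i ∈ u, f i * g i) ^ 2 ≤ (∑ i ∈ u, f i ^ 2) * ∑ i ∈ u, g i ^ 2 :=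
    Finset.sum_mul_sq_le_sq_mul_sq u f g
  have h2 : (∑ i ∈ u, f i ^ 2) ≤ ∑' i, f i ^ 2 :=
    Summable.sum_le_tsum u (fun i _ => sq_nonneg _) hf2
  have h3 : (∑ i ∈ u, g i ^ 2) ≤ ∑' i, g i ^ 2 :=
    Summable.sum_le_tsum u (fun i _ => sq_nonneg _) hg2
  have hnn : 0 ≤ ∑ i ∈ u, f i * g i :=
    Finset.sum_nonneg fun i _ => mul_nonneg (hf i) (hg i)
  have h4 : (∑ i ∈ u, f i * g i) ^ 2 ≤ (∑' i, f i ^ 2) * ∑' i, g i ^ 2 := by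
    calc _ ≤ (∑ i ∈ u, f i ^ 2) * ∑ i ∈ u, g i ^ 2 := h1
    _ ≤ _ := by
      apply mul_le_mul h2 h3 (Finset.sum_nonneg fun i _ => sq_nonneg _)
      exact le_trans (Finset.sum_nonneg fun i _ => sq_nonneg _) h2
  calc ∑ i ∈ u, f i * g i = Real.sqrt ((∑ i ∈ u, f i * g i) ^ 2) := (Real.sqrt_sq hnn).symm
  _ ≤ Real.sqrt ((∑' i, f i ^ 2) * ∑' i, g i ^ 2) := Real.sqrt_le_sqrt h4
  _ = _ := Real.sqrt_mul (tsum_nonneg fun i => sq_nonneg _) _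

/-- Weighted Cauchy–Schwarz (Jensen-type) inequality for infinite sums. -/
theorem wcs_tsum {ι : Type*} (g h : ι → ℝ) (hg : ∀ i, 0 ≤ g i) (hh : ∀ i, 0 ≤ h i)
    (hgs : Summable g) (hgh2 : Summable fun i => g i * h i ^ 2) :
    Summable (fun i => g i * h i) ∧
    (∑' i, g i * h i) ^ 2 ≤ (∑' i, g i) * (∑' i, g i * h i ^ 2) := by
  have key := cs_tsum (fun i => Real.sqrt (g i)) (fun i => Real.sqrt (g i) * h i)
    (fun i => Real.sqrt_nonneg _) (fun i => mul_nonneg (Real.sqrt_nonneg _) (hh i))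
    (by simpa [Real.sq_sqrt (hg _)] using hgs)
    (by
      refine hgh2.congr fun i => ?_
      rw [mul_pow, Real.sq_sqrt (hg i)])
  have heq : ∀ i, Real.sqrt (g i) * (Real.sqrt (g i) * h i) = g i * h i := by
    intro i
    rw [← mul_assoc, Real.mul_self_sqrt (hg i)]
  have hsum : Summable (fun i => g i * h i) := key.1.congr heq
  refine ⟨hsum, ?_⟩
  have h2 := key.2
  rw [tsum_congr heq] at h2
  have h3 : ∀ i, (Real.sqrt (g i)) ^ 2 = g i := fun i => Real.sq_sqrt (hg i)
  rw [tsum_congr h3] at h2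
  have h4 : ∀ i, (Real.sqrt (g i) * h i) ^ 2 = g i * h i ^ 2 := by
    intro i; rw [mul_pow, Real.sq_sqrt (hg i)]
  rw [tsum_congr h4] at h2
  have hnn : 0 ≤ ∑' i, g i * h i := tsum_nonneg fun i => mul_nonneg (hg i) (hh i)
  calc (∑' i, g i * h i) ^ 2
      ≤ (Real.sqrt (∑' i, g i) * Real.sqrt (∑' i, g i * h i ^ 2)) ^ 2 := by
        apply pow_le_pow_left₀ hnn h2
    _ = _ := by
        rw [mul_pow, Real.sq_sqrt (tsum_nonneg fun i => hg i),
          Real.sq_sqrt (tsum_nonneg fun i => mul_nonneg (hg i) (sq_nonneg _))]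

/-- Summability of the inverse weight from polynomial growth. -/
theorem aux_summable_inv {G : Type*} (l : G → ℝ) (hnn : ∀ γ, 0 ≤ l γ)
    (c m : ℝ) (hc : 0 < c)
    (hfin : ∀ r : ℝ, 0 ≤ r → {γ : G | l γ ≤ r}.Finite)
    (hcard : ∀ r : ℝ, 0 ≤ r → (Nat.card {γ : G | l γ ≤ r} : ℝ) ≤ c * (1 + r) ^ m)
    (b : ℝ) (hm : 0 < m) (hb : m + 1 < b) :
    Summable (fun γ : G => (1 + l γ) ^ (-b)) := by
  classical
  have hb0 : 0 < b := by linarith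
  have hnat : Summable (fun n : ℕ => (1 + (n : ℝ)) ^ (m - b)) := by
    have h0 : Summable (fun n : ℕ => (n : ℝ) ^ (m - b)) :=
      Real.summable_nat_rpow.2 (by linarith)
    have := (summable_nat_add_iff (f := fun n : ℕ => (n : ℝ) ^ (m - b)) 1).2 h0
    refine this.congr fun n => ?_
    push_cast
    ring_nf
  set Cb : ℝ := (2 : ℝ) ^ b * c * ∑' n : ℕ, (1 + (n : ℝ)) ^ (m - b) with hCb
  apply summable_of_sum_le (fun γ => Real.rpow_nonneg (by linarith [hnn γ]) _)
  intro u
  set N : G → ℕ := fun γ => ⌈l γ⌉₊ with hN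
  have hpt : ∀ γ, (1 + l γ) ^ (-b) ≤ (2 : ℝ) ^ b * (1 + (N γ : ℝ)) ^ (-b) := by
    intro γ
    have h1 : (0:ℝ) < 1 + l γ := by linarith [hnn γ]
    have h2 : (1 + (N γ : ℝ)) ≤ 2 * (1 + l γ) := by
      have := Nat.ceil_lt_add_one (hnn γ)
      simp only [hN]
      linarith [hnn γ]
    have h3 : (0:ℝ) < 1 + (N γ : ℝ) := by positivity
    rw [Real.rpow_neg h1.le, Real.rpow_neg h3.le]
    rw [show (2:ℝ)^b * ((1 + (N γ:ℝ))^b)⁻¹ = (((1 + (N γ:ℝ))/2)^b)⁻¹ by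
      rw [Real.div_rpow h3.le (by norm_num)]
      field_simp]
    apply inv_anti₀
    · positivity
    · apply Real.rpow_le_rpow (by positivity) (by linarith) hb0.le
  calc ∑ γ ∈ u, (1 + l γ) ^ (-b)
      ≤ ∑ γ ∈ u, (2:ℝ) ^ b * (1 + (N γ : ℝ)) ^ (-b) := Finset.sum_le_sum fun γ _ => hpt γ
    _ = ∑ n ∈ Finset.range (u.sup N + 1), ∑ γ ∈ u.filter (fun γ => N γ = n),
          (2:ℝ) ^ b * (1 + (n : ℝ)) ^ (-b) := by
        rw [← Finset.sum_fiberwise_of_maps_to (t := Finset.range (u.sup N + 1))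
          (fun γ hγ => Finset.mem_range.2 (Nat.lt_succ_of_le (Finset.le_sup hγ)))
          (fun γ => (2:ℝ) ^ b * (1 + (N γ : ℝ)) ^ (-b))]
        refine Finset.sum_congr rfl fun n _ => Finset.sum_congr rfl fun γ hγ => ?_
        rw [(Finset.mem_filter.1 hγ).2]
    _ ≤ ∑ n ∈ Finset.range (u.sup N + 1), (c * (1 + (n:ℝ)) ^ m) * ((2:ℝ) ^ b * (1 + (n : ℝ)) ^ (-b)) := by
        apply Finset.sum_le_sum
        intro n _
        rw [Finset.sum_const, nsmul_eq_mul]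
        apply mul_le_mul_of_nonneg_right _ (by positivity)
        calc ((u.filter (fun γ => N γ = n)).card : ℝ)
            ≤ (((hfin n (by positivity)).toFinset).card : ℝ) := by
              have hsub : u.filter (fun γ => N γ = n) ⊆ (hfin n (by positivity)).toFinset := by
                intro γ hγ
                simp only [Finset.mem_filter] at hγ
                simp only [Set.Finite.mem_toFinset, Set.mem_setOf_eq]
                rw [← hγ.2]
                exact Nat.le_ceil _
              exact_mod_cast Finset.card_le_card hsub
          _ ≤ c * (1 + (n:ℝ)) ^ m := by
              have := hcard n (by positivity)
              rwa [show (Nat.card {γ : G | l γ ≤ (n:ℝ)} : ℝ) =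
                (((hfin n (by positivity)).toFinset).card : ℝ) by
                  exact_mod_cast Nat.card_eq_card_finite_toFinset _] at this
    _ = (2:ℝ)^b * c * ∑ n ∈ Finset.range (u.sup N + 1), (1 + (n:ℝ)) ^ (m - b) := by
        rw [Finset.mul_sum]
        refine Finset.sum_congr rfl fun n _ => ?_
        rw [show m - b = m + -b by ring, Real.rpow_add (by positivity)]
        ring
    _ ≤ Cb := by
        rw [hCb]
        apply mul_le_mul_of_nonneg_left _ (by positivity)
        exact Summable.sum_le_tsum _ (fun n _ => Real.rpow_nonneg (by positivity) _) hnat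

set_option maxHeartbeats 2000000 in
/-- For a group of polynomial growth with exponent `m` and `2a > m + 2`, the weighted norm
`‖·‖ₐ` is submultiplicative up to a constant under convolution:
`‖t * s‖ₐ ≤ Cₐ ‖t‖ₐ ‖s‖ₐ`; hence `(W_a(G), Cₐ‖·‖ₐ)` is a Banach algebra. -/
theorem stmt12 {G : Type*} [Group G] [Countable G] (l : G → ℝ)
    (hnn : ∀ γ, 0 ≤ l γ) (hone : l 1 = 0)
    (hinv : ∀ γ, l γ⁻¹ = l γ) (hsub : ∀ γ δ, l (γ * δ) ≤ l γ + l δ)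
    (c m : ℝ) (hc : 0 < c) (hm : 0 < m)
    (hfin : ∀ r : ℝ, 0 ≤ r → {γ : G | l γ ≤ r}.Finite)
    (hcard : ∀ r : ℝ, 0 ≤ r → (Nat.card {γ : G | l γ ≤ r} : ℝ) ≤ c * (1 + r) ^ m)
    (a : ℝ) (ha : m + 2 < 2 * a) :
    ∃ C > (0 : ℝ), ∀ t s : G → ℂ,
      (Summable fun γ : G => ‖t γ‖ ^ 2 * (1 + l γ) ^ (2 * a)) →
      (Summable fun γ : G => ‖s γ‖ ^ 2 * (1 + l γ) ^ (2 * a)) →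
      (Summable fun γ : G => ‖∑' δ : G, t δ * s (δ⁻¹ * γ)‖ ^ 2 * (1 + l γ) ^ (2 * a)) ∧
      Real.sqrt (∑' γ : G, ‖∑' δ : G, t δ * s (δ⁻¹ * γ)‖ ^ 2 * (1 + l γ) ^ (2 * a)) ≤
        C * Real.sqrt (∑' γ : G, ‖t γ‖ ^ 2 * (1 + l γ) ^ (2 * a)) *
          Real.sqrt (∑' γ : G, ‖s γ‖ ^ 2 * (1 + l γ) ^ (2 * a)) := by
  classical
  have ha0 : 0 < a := by linarith
  have h1l : ∀ γ : G, (0:ℝ) < 1 + l γ := fun γ => by linarith [hnn γ]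
  -- weight and its basic properties
  set w : G → ℝ := fun γ => (1 + l γ) ^ a with hw
  have hw0 : ∀ γ, 0 < w γ := fun γ => Real.rpow_pos_of_pos (h1l γ) _
  have hw1 : ∀ γ, 1 ≤ w γ := fun γ => Real.one_le_rpow (by linarith [hnn γ]) ha0.le
  have hwsq : ∀ γ, w γ ^ 2 = (1 + l γ) ^ (2 * a) := by
    intro γ
    rw [hw]
    rw [← Real.rpow_natCast ((1 + l γ) ^ a) 2, ← Real.rpow_mul (h1l γ).le]
    norm_num
    rw [mul_comm]
  -- summability of inverse weight
  have hKsum : Summable (fun γ : G => (1 + l γ) ^ (-(2 * a))) :=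
    aux_summable_inv l hnn c m hc hfin hcard (2 * a) hm (by linarith)
  set K : ℝ := ∑' γ : G, (1 + l γ) ^ (-(2 * a)) with hK
  have hK1 : (1:ℝ) ≤ K := by
    have := Summable.le_tsum hKsum 1 (fun j _ => Real.rpow_nonneg (h1l j).le _)
    simpa [hone] using this
  have hKpos : (0:ℝ) < K := lt_of_lt_of_le one_pos hK1
  have hK0 : (0:ℝ) ≤ K := hKpos.le
  -- key triangle-type inequality for the weight
  have hkey : ∀ γ δ : G, w γ ≤ 2 ^ a * (w δ + w (δ⁻¹ * γ)) := by
    intro γ δ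
    have hlγ : l γ ≤ l δ + l (δ⁻¹ * γ) := by
      have := hsub δ (δ⁻¹ * γ)
      simpa [mul_inv_cancel_left] using this
    have hM1 : (0:ℝ) < max (1 + l δ) (1 + l (δ⁻¹ * γ)) :=
      lt_of_lt_of_le (h1l δ) (le_max_left _ _)
    have hM : 1 + l γ ≤ 2 * max (1 + l δ) (1 + l (δ⁻¹ * γ)) := by
      rcases le_total (l δ) (l (δ⁻¹ * γ)) with h | h
      · have : max (1 + l δ) (1 + l (δ⁻¹ * γ)) = 1 + l (δ⁻¹ * γ) := max_eq_right (by linarith)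
        rw [this]; linarith
      · have : max (1 + l δ) (1 + l (δ⁻¹ * γ)) = 1 + l δ := max_eq_left (by linarith)
        rw [this]; linarith
    calc w γ ≤ (2 * max (1 + l δ) (1 + l (δ⁻¹ * γ))) ^ a :=
          Real.rpow_le_rpow (h1l γ).le hM ha0.le
      _ = 2 ^ a * (max (1 + l δ) (1 + l (δ⁻¹ * γ))) ^ a :=
          Real.mul_rpow (by norm_num) hM1.le
      _ ≤ 2 ^ a * (w δ + w (δ⁻¹ * γ)) := by
          apply mul_le_mul_of_nonneg_left _ (Real.rpow_nonneg (by norm_num) _)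
          rcases max_cases (1 + l δ) (1 + l (δ⁻¹ * γ)) with ⟨hEq, _⟩ | ⟨hEq, _⟩ <;> rw [hEq]
          · exact le_add_of_nonneg_right (hw0 _).le
          · exact le_add_of_nonneg_left (hw0 _).le
  -- the constant
  refine ⟨2 ^ (a + 1) * Real.sqrt K, by positivity, ?_⟩
  intro t s ht hs
  set tbar : G → ℝ := fun γ => ‖t γ‖ with htbar
  set sbar : G → ℝ := fun γ => ‖s γ‖ with hsbar
  set T : G → ℝ := fun γ => tbar γ * w γ with hT
  set S : G → ℝ := fun γ => sbar γ * w γ with hS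
  have hT0 : ∀ γ, 0 ≤ T γ := fun γ => mul_nonneg (norm_nonneg _) (hw0 γ).le
  have hS0 : ∀ γ, 0 ≤ S γ := fun γ => mul_nonneg (norm_nonneg _) (hw0 γ).le
  have htbar0 : ∀ γ, (0:ℝ) ≤ tbar γ := fun γ => norm_nonneg _
  have hsbar0 : ∀ γ, (0:ℝ) ≤ sbar γ := fun γ => norm_nonneg _
  have hTsqeq : ∀ γ, ‖t γ‖ ^ 2 * (1 + l γ) ^ (2 * a) = T γ ^ 2 := by
    intro γ; rw [hT, mul_pow, hwsq]
  have hSsqeq : ∀ γ, ‖s γ‖ ^ 2 * (1 + l γ) ^ (2 * a) = S γ ^ 2 := by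
    intro γ; rw [hS, mul_pow, hwsq]
  have hT2 : Summable (fun γ => T γ ^ 2) := ht.congr hTsqeq
  have hS2 : Summable (fun γ => S γ ^ 2) := hs.congr hSsqeq
  set NT2 : ℝ := ∑' γ, T γ ^ 2 with hNT2
  set NS2 : ℝ := ∑' γ, S γ ^ 2 with hNS2
  have hNT20 : 0 ≤ NT2 := tsum_nonneg fun γ => sq_nonneg _
  have hNS20 : 0 ≤ NS2 := tsum_nonneg fun γ => sq_nonneg _
  have htbarle : ∀ γ, tbar γ ≤ T γ := fun γ =>
    le_mul_of_one_le_right (htbar0 γ) (hw1 γ)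
  have hsbarle : ∀ γ, sbar γ ≤ S γ := fun γ =>
    le_mul_of_one_le_right (hsbar0 γ) (hw1 γ)
  have htbar2 : Summable (fun γ => tbar γ ^ 2) :=
    Summable.of_nonneg_of_le (fun γ => sq_nonneg _)
      (fun γ => pow_le_pow_left₀ (htbar0 γ) (htbarle γ) 2) hT2
  have hsbar2 : Summable (fun γ => sbar γ ^ 2) :=
    Summable.of_nonneg_of_le (fun γ => sq_nonneg _)
      (fun γ => pow_le_pow_left₀ (hsbar0 γ) (hsbarle γ) 2) hS2
  -- ℓ¹ bounds via inverse weight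
  have hinvsq : ∀ γ : G, ((1 + l γ) ^ (-a)) ^ 2 = (1 + l γ) ^ (-(2 * a)) := by
    intro γ
    rw [← Real.rpow_natCast ((1 + l γ) ^ (-a)) 2, ← Real.rpow_mul (h1l γ).le]
    norm_num
    ring_nf
  have hinvmulT : ∀ γ : G, (1 + l γ) ^ (-a) * T γ = tbar γ := by
    intro γ
    rw [hT, Real.rpow_neg (h1l γ).le, hw]
    rw [mul_comm, mul_assoc, mul_inv_cancel₀ (Real.rpow_pos_of_pos (h1l γ) a).ne', mul_one]
  have hinvmulS : ∀ γ : G, (1 + l γ) ^ (-a) * S γ = sbar γ := by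
    intro γ
    rw [hS, Real.rpow_neg (h1l γ).le, hw]
    rw [mul_comm, mul_assoc, mul_inv_cancel₀ (Real.rpow_pos_of_pos (h1l γ) a).ne', mul_one]
  have ht1 := cs_tsum (fun γ : G => (1 + l γ) ^ (-a)) T
    (fun γ => Real.rpow_nonneg (h1l γ).le _) hT0
    ((hKsum.congr (fun γ => (hinvsq γ).symm))) hT2
  have hs1 := cs_tsum (fun γ : G => (1 + l γ) ^ (-a)) S
    (fun γ => Real.rpow_nonneg (h1l γ).le _) hS0
    ((hKsum.congr (fun γ => (hinvsq γ).symm))) hS2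
  have htbarsum : Summable tbar := ht1.1.congr hinvmulT
  have hsbarsum : Summable sbar := hs1.1.congr hinvmulS
  set nt : ℝ := ∑' γ, tbar γ with hnt
  set ns : ℝ := ∑' γ, sbar γ with hns
  have hnt0 : 0 ≤ nt := tsum_nonneg htbar0
  have hns0 : 0 ≤ ns := tsum_nonneg hsbar0
  have hntK : nt ^ 2 ≤ K * NT2 := by
    have h2 := ht1.2
    rw [tsum_congr hinvmulT, tsum_congr hinvsq] at h2
    calc nt ^ 2 ≤ (Real.sqrt K * Real.sqrt NT2) ^ 2 := pow_le_pow_left₀ hnt0 h2 2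
      _ = K * NT2 := by rw [mul_pow, Real.sq_sqrt hK0, Real.sq_sqrt hNT20]
  have hnsK : ns ^ 2 ≤ K * NS2 := by
    have h2 := hs1.2
    rw [tsum_congr hinvmulS, tsum_congr hinvsq] at h2
    calc ns ^ 2 ≤ (Real.sqrt K * Real.sqrt NS2) ^ 2 := pow_le_pow_left₀ hns0 h2 2
      _ = K * NS2 := by rw [mul_pow, Real.sq_sqrt hK0, Real.sq_sqrt hNS20]
  -- translation equivalences
  have etrans : ∀ γ : G, ∀ f : G → ℝ, Summable f → Summable (fun δ : G => f (δ⁻¹ * γ)) := by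
    intro γ f hf
    have := ((Equiv.inv G).trans (Equiv.mulRight γ)).summable_iff.2 hf
    simpa [Function.comp_def] using this
  have etsum : ∀ γ : G, ∀ f : G → ℝ, (∑' δ : G, f (δ⁻¹ * γ)) = ∑' δ, f δ := by
    intro γ f
    exact ((Equiv.inv G).trans (Equiv.mulRight γ)).tsum_eq f
  -- per-γ summabilities
  have hsbar2γ : ∀ γ : G, Summable (fun δ => sbar (δ⁻¹ * γ) ^ 2) := fun γ =>
    etrans γ _ hsbar2
  have hS2γ : ∀ γ : G, Summable (fun δ => S (δ⁻¹ * γ) ^ 2) := fun γ =>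
    etrans γ _ hS2
  have hsummA : ∀ γ : G, Summable (fun δ => T δ * sbar (δ⁻¹ * γ)) := fun γ =>
    (cs_tsum T (fun δ => sbar (δ⁻¹ * γ)) hT0 (fun δ => hsbar0 _) hT2 (hsbar2γ γ)).1
  have hsummB : ∀ γ : G, Summable (fun δ => tbar δ * S (δ⁻¹ * γ)) := fun γ =>
    (cs_tsum tbar (fun δ => S (δ⁻¹ * γ)) htbar0 (fun δ => hS0 _) htbar2 (hS2γ γ)).1
  have hsummts : ∀ γ : G, Summable (fun δ => tbar δ * sbar (δ⁻¹ * γ)) := fun γ =>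
    (cs_tsum tbar (fun δ => sbar (δ⁻¹ * γ)) htbar0 (fun δ => hsbar0 _) htbar2 (hsbar2γ γ)).1
  set A : G → ℝ := fun γ => ∑' δ, T δ * sbar (δ⁻¹ * γ) with hA
  set B : G → ℝ := fun γ => ∑' δ, tbar δ * S (δ⁻¹ * γ) with hB
  have hA0 : ∀ γ, 0 ≤ A γ := fun γ =>
    tsum_nonneg fun δ => mul_nonneg (hT0 δ) (hsbar0 _)
  have hB0 : ∀ γ, 0 ≤ B γ := fun γ =>
    tsum_nonneg fun δ => mul_nonneg (htbar0 δ) (hS0 _)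
  -- pointwise convolution bound
  have hFAB : ∀ γ : G, ‖∑' δ : G, t δ * s (δ⁻¹ * γ)‖ * w γ ≤ 2 ^ a * (A γ + B γ) := by
    intro γ
    have hnorm : ‖∑' δ : G, t δ * s (δ⁻¹ * γ)‖ ≤ ∑' δ, tbar δ * sbar (δ⁻¹ * γ) := by
      have h1 : Summable (fun δ => ‖t δ * s (δ⁻¹ * γ)‖) :=
        (hsummts γ).congr fun δ => by rw [norm_mul]
      calc ‖∑' δ : G, t δ * s (δ⁻¹ * γ)‖ ≤ ∑' δ, ‖t δ * s (δ⁻¹ * γ)‖ :=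
            norm_tsum_le_tsum_norm h1
        _ = _ := tsum_congr fun δ => by rw [norm_mul]
    calc ‖∑' δ : G, t δ * s (δ⁻¹ * γ)‖ * w γ
        ≤ (∑' δ, tbar δ * sbar (δ⁻¹ * γ)) * w γ :=
          mul_le_mul_of_nonneg_right hnorm (hw0 γ).le
      _ = ∑' δ, tbar δ * sbar (δ⁻¹ * γ) * w γ := (tsum_mul_right).symm
      _ ≤ ∑' δ, 2 ^ a * (T δ * sbar (δ⁻¹ * γ) + tbar δ * S (δ⁻¹ * γ)) := by
          apply Summable.tsum_le_tsum _ ((hsummts γ).mul_right _)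
            (((hsummA γ).add (hsummB γ)).mul_left _)
          intro δ
          have h1 := mul_le_mul_of_nonneg_left (hkey γ δ)
            (mul_nonneg (htbar0 δ) (hsbar0 (δ⁻¹ * γ)))
          calc tbar δ * sbar (δ⁻¹ * γ) * w γ
              ≤ tbar δ * sbar (δ⁻¹ * γ) * (2 ^ a * (w δ + w (δ⁻¹ * γ))) := h1
            _ = 2 ^ a * (T δ * sbar (δ⁻¹ * γ) + tbar δ * S (δ⁻¹ * γ)) := by
                rw [hT, hS]; ring
      _ = 2 ^ a * (A γ + B γ) := by
          rw [tsum_mul_left, Summable.tsum_add (hsummA γ) (hsummB γ)]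
  -- Jensen bound for A
  have hsbartrans : ∀ γ : G, (∑' δ : G, sbar (δ⁻¹ * γ)) = ns := fun γ => etsum γ sbar
  have hIA : ∀ γ : G, Summable (fun δ => sbar (δ⁻¹ * γ) * T δ ^ 2) := by
    intro γ
    apply Summable.of_nonneg_of_le (fun δ => mul_nonneg (hsbar0 _) (sq_nonneg _))
      (fun δ => ?_) (hT2.mul_left ns)
    apply mul_le_mul_of_nonneg_right _ (sq_nonneg _)
    rw [← hsbartrans γ]
    exact Summable.le_tsum (etrans γ sbar hsbarsum) δ (fun j _ => hsbar0 _)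
  have hAsq : ∀ γ : G, A γ ^ 2 ≤ ns * ∑' δ, sbar (δ⁻¹ * γ) * T δ ^ 2 := by
    intro γ
    have key := wcs_tsum (fun δ => sbar (δ⁻¹ * γ)) T (fun δ => hsbar0 _) hT0
      (etrans γ sbar hsbarsum) (hIA γ)
    have h2 := key.2
    rw [hsbartrans γ] at h2
    calc A γ ^ 2 = (∑' δ, sbar (δ⁻¹ * γ) * T δ) ^ 2 := by
          rw [hA]; congr 1; exact tsum_congr fun δ => mul_comm _ _
      _ ≤ _ := h2
  -- partial-sum bound for ∑_γ IA γ
  have hIAsum : ∀ u : Finset G, ∑ γ ∈ u, (∑' δ, sbar (δ⁻¹ * γ) * T δ ^ 2) ≤ ns * NT2 := by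
    intro u
    rw [← Summable.tsum_finsetSum (fun γ _ => hIA γ)]
    have hinner : ∀ δ : G, ∑ γ ∈ u, sbar (δ⁻¹ * γ) * T δ ^ 2 ≤ ns * T δ ^ 2 := by
      intro δ
      rw [← Finset.sum_mul]
      apply mul_le_mul_of_nonneg_right _ (sq_nonneg _)
      have hsummable : Summable (fun γ => sbar (δ⁻¹ * γ)) := by
        have := (Equiv.mulLeft δ⁻¹).summable_iff.2 hsbarsum
        simpa [Function.comp_def] using this
      calc ∑ γ ∈ u, sbar (δ⁻¹ * γ) ≤ ∑' γ, sbar (δ⁻¹ * γ) :=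
            Summable.sum_le_tsum u (fun γ _ => hsbar0 _) hsummable
        _ = ns := (Equiv.mulLeft δ⁻¹).tsum_eq sbar
    have hsum1 : Summable (fun δ => ∑ γ ∈ u, sbar (δ⁻¹ * γ) * T δ ^ 2) := by
      apply Summable.of_nonneg_of_le
        (fun δ => Finset.sum_nonneg fun γ _ => mul_nonneg (hsbar0 _) (sq_nonneg _))
        hinner (hT2.mul_left ns)
    calc (∑' δ, ∑ γ ∈ u, sbar (δ⁻¹ * γ) * T δ ^ 2)
        ≤ ∑' δ, ns * T δ ^ 2 := Summable.tsum_le_tsum hinner hsum1 (hT2.mul_left ns)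
      _ = ns * NT2 := by rw [tsum_mul_left]
  have hAsummable : Summable (fun γ => A γ ^ 2) := by
    apply summable_of_sum_le (fun γ => sq_nonneg _)
    intro u
    calc ∑ γ ∈ u, A γ ^ 2 ≤ ∑ γ ∈ u, ns * ∑' δ, sbar (δ⁻¹ * γ) * T δ ^ 2 :=
          Finset.sum_le_sum fun γ _ => hAsq γ
      _ = ns * ∑ γ ∈ u, ∑' δ, sbar (δ⁻¹ * γ) * T δ ^ 2 := by rw [Finset.mul_sum]
      _ ≤ ns * (ns * NT2) := mul_le_mul_of_nonneg_left (hIAsum u) hns0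
  have hAbound : ∑' γ, A γ ^ 2 ≤ ns ^ 2 * NT2 := by
    apply Summable.tsum_le_of_sum_le hAsummable
    intro u
    calc ∑ γ ∈ u, A γ ^ 2 ≤ ∑ γ ∈ u, ns * ∑' δ, sbar (δ⁻¹ * γ) * T δ ^ 2 :=
          Finset.sum_le_sum fun γ _ => hAsq γ
      _ = ns * ∑ γ ∈ u, ∑' δ, sbar (δ⁻¹ * γ) * T δ ^ 2 := by rw [Finset.mul_sum]
      _ ≤ ns * (ns * NT2) := mul_le_mul_of_nonneg_left (hIAsum u) hns0
      _ = ns ^ 2 * NT2 := by ring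
  -- Jensen bound for B (after reindexing)
  have hBrew : ∀ γ : G, B γ = ∑' η, tbar (γ * η⁻¹) * S η := by
    intro γ
    have h := (((Equiv.inv G).trans (Equiv.mulLeft γ)).tsum_eq
      (fun δ => tbar δ * S (δ⁻¹ * γ))).symm
    rw [show B γ = ∑' δ, tbar δ * S (δ⁻¹ * γ) from rfl, h]
    refine tsum_congr fun η => ?_
    simp [mul_assoc]
  have htbartransB : ∀ γ : G, (∑' η : G, tbar (γ * η⁻¹)) = nt := by
    intro γ
    exact ((Equiv.inv G).trans (Equiv.mulLeft γ)).tsum_eq tbar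
  have htbartransBsummable : ∀ γ : G, Summable (fun η : G => tbar (γ * η⁻¹)) := by
    intro γ
    have := ((Equiv.inv G).trans (Equiv.mulLeft γ)).summable_iff.2 htbarsum
    simpa [Function.comp_def] using this
  have hIB : ∀ γ : G, Summable (fun η => tbar (γ * η⁻¹) * S η ^ 2) := by
    intro γ
    apply Summable.of_nonneg_of_le (fun η => mul_nonneg (htbar0 _) (sq_nonneg _))
      (fun η => ?_) (hS2.mul_left nt)
    apply mul_le_mul_of_nonneg_right _ (sq_nonneg _)
    rw [← htbartransB γ]
    exact Summable.le_tsum (htbartransBsummable γ) η (fun j _ => htbar0 _)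
  have hBsq : ∀ γ : G, B γ ^ 2 ≤ nt * ∑' η, tbar (γ * η⁻¹) * S η ^ 2 := by
    intro γ
    have key := wcs_tsum (fun η => tbar (γ * η⁻¹)) S (fun η => htbar0 _) hS0
      (htbartransBsummable γ) (hIB γ)
    have h2 := key.2
    rw [htbartransB γ] at h2
    rw [hBrew γ]
    exact h2
  have hIBsum : ∀ u : Finset G, ∑ γ ∈ u, (∑' η, tbar (γ * η⁻¹) * S η ^ 2) ≤ nt * NS2 := by
    intro u
    rw [← Summable.tsum_finsetSum (fun γ _ => hIB γ)]
    have hinner : ∀ η : G, ∑ γ ∈ u, tbar (γ * η⁻¹) * S η ^ 2 ≤ nt * S η ^ 2 := by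
      intro η
      rw [← Finset.sum_mul]
      apply mul_le_mul_of_nonneg_right _ (sq_nonneg _)
      have hsummable : Summable (fun γ => tbar (γ * η⁻¹)) := by
        have := (Equiv.mulRight η⁻¹).summable_iff.2 htbarsum
        simpa [Function.comp_def] using this
      calc ∑ γ ∈ u, tbar (γ * η⁻¹) ≤ ∑' γ, tbar (γ * η⁻¹) :=
            Summable.sum_le_tsum u (fun γ _ => htbar0 _) hsummable
        _ = nt := (Equiv.mulRight η⁻¹).tsum_eq tbar
    have hsum1 : Summable (fun η => ∑ γ ∈ u, tbar (γ * η⁻¹) * S η ^ 2) := by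
      apply Summable.of_nonneg_of_le
        (fun η => Finset.sum_nonneg fun γ _ => mul_nonneg (htbar0 _) (sq_nonneg _))
        hinner (hS2.mul_left nt)
    calc (∑' η, ∑ γ ∈ u, tbar (γ * η⁻¹) * S η ^ 2)
        ≤ ∑' η, nt * S η ^ 2 := Summable.tsum_le_tsum hinner hsum1 (hS2.mul_left nt)
      _ = nt * NS2 := by rw [tsum_mul_left]
  have hBsummable : Summable (fun γ => B γ ^ 2) := by
    apply summable_of_sum_le (fun γ => sq_nonneg _)
    intro u
    calc ∑ γ ∈ u, B γ ^ 2 ≤ ∑ γ ∈ u, nt * ∑' η, tbar (γ * η⁻¹) * S η ^ 2 :=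
          Finset.sum_le_sum fun γ _ => hBsq γ
      _ = nt * ∑ γ ∈ u, ∑' η, tbar (γ * η⁻¹) * S η ^ 2 := by rw [Finset.mul_sum]
      _ ≤ nt * (nt * NS2) := mul_le_mul_of_nonneg_left (hIBsum u) hnt0
  have hBbound : ∑' γ, B γ ^ 2 ≤ nt ^ 2 * NS2 := by
    apply Summable.tsum_le_of_sum_le hBsummable
    intro u
    calc ∑ γ ∈ u, B γ ^ 2 ≤ ∑ γ ∈ u, nt * ∑' η, tbar (γ * η⁻¹) * S η ^ 2 :=
          Finset.sum_le_sum fun γ _ => hBsq γ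
      _ = nt * ∑ γ ∈ u, ∑' η, tbar (γ * η⁻¹) * S η ^ 2 := by rw [Finset.mul_sum]
      _ ≤ nt * (nt * NS2) := mul_le_mul_of_nonneg_left (hIBsum u) hnt0
      _ = nt ^ 2 * NS2 := by ring
  -- combine
  have hLHSpt : ∀ γ : G, ‖∑' δ : G, t δ * s (δ⁻¹ * γ)‖ ^ 2 * (1 + l γ) ^ (2 * a) ≤
      2 * (2 ^ a) ^ 2 * (A γ ^ 2 + B γ ^ 2) := by
    intro γ
    have h1 : ‖∑' δ : G, t δ * s (δ⁻¹ * γ)‖ ^ 2 * (1 + l γ) ^ (2 * a) =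
        (‖∑' δ : G, t δ * s (δ⁻¹ * γ)‖ * w γ) ^ 2 := by
      rw [mul_pow, hwsq]
    rw [h1]
    have h2 : (‖∑' δ : G, t δ * s (δ⁻¹ * γ)‖ * w γ) ^ 2 ≤ (2 ^ a * (A γ + B γ)) ^ 2 := by
      apply pow_le_pow_left₀ (mul_nonneg (norm_nonneg _) (hw0 γ).le) (hFAB γ)
    calc _ ≤ (2 ^ a * (A γ + B γ)) ^ 2 := h2
      _ = (2 ^ a) ^ 2 * (A γ + B γ) ^ 2 := by ring
      _ ≤ (2 ^ a) ^ 2 * (2 * (A γ ^ 2 + B γ ^ 2)) := by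
          apply mul_le_mul_of_nonneg_left _ (sq_nonneg _)
          nlinarith [sq_nonneg (A γ - B γ)]
      _ = 2 * (2 ^ a) ^ 2 * (A γ ^ 2 + B γ ^ 2) := by ring
  have hRHSsummable : Summable (fun γ => 2 * (2 ^ a : ℝ) ^ 2 * (A γ ^ 2 + B γ ^ 2)) :=
    ((hAsummable.add hBsummable).mul_left _)
  have hLHSsummable : Summable (fun γ : G =>
      ‖∑' δ : G, t δ * s (δ⁻¹ * γ)‖ ^ 2 * (1 + l γ) ^ (2 * a)) := by
    apply Summable.of_nonneg_of_le (fun γ => ?_) hLHSpt hRHSsummable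
    exact mul_nonneg (sq_nonneg _) (Real.rpow_nonneg (h1l γ).le _)
  refine ⟨hLHSsummable, ?_⟩
  have hfinal : ∑' γ : G, ‖∑' δ : G, t δ * s (δ⁻¹ * γ)‖ ^ 2 * (1 + l γ) ^ (2 * a) ≤
      (2 ^ (a + 1) * Real.sqrt K) ^ 2 * NT2 * NS2 := by
    calc ∑' γ : G, ‖∑' δ : G, t δ * s (δ⁻¹ * γ)‖ ^ 2 * (1 + l γ) ^ (2 * a)
        ≤ ∑' γ, 2 * (2 ^ a : ℝ) ^ 2 * (A γ ^ 2 + B γ ^ 2) :=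
          Summable.tsum_le_tsum hLHSpt hLHSsummable hRHSsummable
      _ = 2 * (2 ^ a : ℝ) ^ 2 * ((∑' γ, A γ ^ 2) + ∑' γ, B γ ^ 2) := by
          rw [tsum_mul_left, Summable.tsum_add hAsummable hBsummable]
      _ ≤ 2 * (2 ^ a : ℝ) ^ 2 * (ns ^ 2 * NT2 + nt ^ 2 * NS2) := by
          apply mul_le_mul_of_nonneg_left (add_le_add hAbound hBbound) (by positivity)
      _ ≤ 2 * (2 ^ a : ℝ) ^ 2 * (K * NS2 * NT2 + K * NT2 * NS2) := by
          apply mul_le_mul_of_nonneg_left _ (by positivity)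
          apply add_le_add
          · exact mul_le_mul_of_nonneg_right hnsK hNT20
          · exact mul_le_mul_of_nonneg_right hntK hNS20
      _ = (2 ^ (a + 1) * Real.sqrt K) ^ 2 * NT2 * NS2 := by
          rw [mul_pow, Real.sq_sqrt hK0, Real.rpow_add (by norm_num : (0:ℝ) < 2),
            Real.rpow_one]
          ring
  have hgoal : Real.sqrt (∑' γ : G, ‖∑' δ : G, t δ * s (δ⁻¹ * γ)‖ ^ 2 * (1 + l γ) ^ (2 * a)) ≤
      2 ^ (a + 1) * Real.sqrt K * Real.sqrt NT2 * Real.sqrt NS2 := by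
    have hCnn : (0:ℝ) ≤ 2 ^ (a + 1) * Real.sqrt K := by positivity
    calc Real.sqrt (∑' γ : G, ‖∑' δ : G, t δ * s (δ⁻¹ * γ)‖ ^ 2 * (1 + l γ) ^ (2 * a))
        ≤ Real.sqrt ((2 ^ (a + 1) * Real.sqrt K) ^ 2 * NT2 * NS2) :=
          Real.sqrt_le_sqrt hfinal
      _ = 2 ^ (a + 1) * Real.sqrt K * Real.sqrt NT2 * Real.sqrt NS2 := by
          rw [Real.sqrt_mul (by positivity), Real.sqrt_mul (by positivity),
            Real.sqrt_sq hCnn]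
  calc Real.sqrt (∑' γ : G, ‖∑' δ : G, t δ * s (δ⁻¹ * γ)‖ ^ 2 * (1 + l γ) ^ (2 * a))
      ≤ 2 ^ (a + 1) * Real.sqrt K * Real.sqrt NT2 * Real.sqrt NS2 := hgoal
    _ = 2 ^ (a + 1) * Real.sqrt K *
        Real.sqrt (∑' γ : G, ‖t γ‖ ^ 2 * (1 + l γ) ^ (2 * a)) *
        Real.sqrt (∑' γ : G, ‖s γ‖ ^ 2 * (1 + l γ) ^ (2 * a)) := by
        rw [hNT2, hNS2, tsum_congr hTsqeq, tsum_congr hSsqeq]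
end
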